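/- If c1*(a3 + a5) < a2*a4*c2 and all parameters are positive, then the quartic P(u) = -(a2*c2/c1)*u^4 - a1*u^3 + (a3 + a5 - a2*a4*c2/c1)*u^2 - a1*a4*u + a4*a5 has exactly one sign change in its coefficient sequence, and therefore (by Descartes' rule of signs) exactly one positive real root. -/

import Mathlib

/-!
The middle coefficient is negative by the hypothesis, so every coefficient except the constant
term is negative and the sign sequence is `- - - - +`. Hence on `[0, ∞)` the quartic is strictly
decreasing, positive at `0`, and bounded above by its affine part `a4 a5 - a1 a4 u`, which vanishes at
`u = a5 / a1`; by the intermediate value theorem it has exactly one positive root.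
-/

open Set

theorem existsUnique_pos_eq_zero_of_strictAntiOn {f : ℝ → ℝ} {M : ℝ}
    (hcont : ContinuousOn f (Ici 0)) (hanti : StrictAntiOn f (Ici 0))
    (h0 : 0 < f 0) (hM : 0 ≤ M) (hfM : f M ≤ 0) :
    ∃! u : ℝ, 0 < u ∧ f u = 0 := by
  obtain ⟨u, ⟨hu0, -⟩, hfu⟩ :=
    intermediate_value_Icc' hM (hcont.mono Icc_subset_Ici_self) ⟨hfM, h0.le⟩
  have hu : 0 < u := hu0.lt_of_ne (by rintro rfl; exact h0.ne' hfu)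
  exact ⟨u, ⟨hu, hfu⟩, fun v ⟨hv, hfv⟩ => hanti.injOn hv.le hu.le (hfv.trans hfu.symm)⟩

theorem strictAntiOn_neg_quartic {a b c d e : ℝ} (ha : 0 ≤ a) (hb : 0 ≤ b) (hc : c ≤ 0)
    (hd : 0 < d) :
    StrictAntiOn (fun u : ℝ => -a * u ^ 4 - b * u ^ 3 + c * u ^ 2 - d * u + e) (Ici 0) := by
  intro u (hu : 0 ≤ u) v _ huv
  have h4 : a * u ^ 4 ≤ a * v ^ 4 := by gcongr
  have h3 : b * u ^ 3 ≤ b * v ^ 3 := by gcongr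
  have h2 : c * v ^ 2 ≤ c * u ^ 2 := mul_le_mul_of_nonpos_left (by gcongr) hc
  have h1 : d * u < d * v := by gcongr
  simp only
  linarith

theorem existsUnique_pos_root_neg_quartic {a b c d e : ℝ} (ha : 0 ≤ a) (hb : 0 ≤ b)
    (hc : c ≤ 0) (hd : 0 < d) (he : 0 < e) :
    ∃! u : ℝ, 0 < u ∧ -a * u ^ 4 - b * u ^ 3 + c * u ^ 2 - d * u + e = 0 := by
  refine existsUnique_pos_eq_zero_of_strictAntiOn (M := e / d) (by fun_prop)
    (strictAntiOn_neg_quartic ha hb hc hd) (by simpa using he) (by positivity) ?_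
  have hde : d * (e / d) = e := mul_div_cancel₀ e hd.ne'
  have : 0 ≤ a * (e / d) ^ 4 := by positivity
  have : 0 ≤ b * (e / d) ^ 3 := by positivity
  have : c * (e / d) ^ 2 ≤ 0 := mul_nonpos_of_nonpos_of_nonneg hc (by positivity)
  linarith

theorem card_filter_mul_neg_eq_one_of_neg_of_last_pos {n : ℕ} {v : Fin (n + 2) → ℝ}
    (hneg : ∀ i, i ≠ Fin.last (n + 1) → v i < 0) (hlast : 0 < v (Fin.last (n + 1))) :
    (Finset.univ.filter (fun i : Fin (n + 1) => v i.castSucc * v i.succ < 0)).card = 1 := by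
  rw [Finset.card_eq_one]
  refine ⟨Fin.last n, Finset.ext fun i => ?_⟩
  have hi : v i.castSucc < 0 := hneg _ (Fin.castSucc_ne_last i)
  simp only [Finset.mem_filter, Finset.mem_univ, true_and, Finset.mem_singleton]
  by_cases h : i = Fin.last n
  · subst h
    simpa using mul_neg_of_neg_of_pos hi hlast
  · have hs : v i.succ < 0 := hneg _ (fun h' => h (by simpa using h'))
    simpa [h] using (mul_pos_of_neg_of_neg hi hs).le

theorem quartic_one_sign_change_unique_pos_root_general
    (a1 a2 a3 a4 a5 c1 c2 : ℝ)
    (ha1 : 0 < a1) (ha2 : 0 < a2) (ha4 : 0 < a4) (ha5 : 0 < a5)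
    (hc1 : 0 < c1) (hc2 : 0 < c2)
    (hcond : c1 * (a3 + a5) < a2 * a4 * c2) :
    -- coefficient sequence in descending degree
    (let coeffs : Fin 5 → ℝ :=
      ![-(a2 * c2 / c1), -a1, a3 + a5 - a2 * a4 * c2 / c1, -a1 * a4, a4 * a5]
     (Finset.univ.filter
        (fun i : Fin 4 => coeffs i.castSucc * coeffs i.succ < 0)).card = 1) ∧
    (∃! u : ℝ, 0 < u ∧
        -(a2 * c2 / c1) * u ^ 4 - a1 * u ^ 3
          + (a3 + a5 - a2 * a4 * c2 / c1) * u ^ 2 - a1 * a4 * u + a4 * a5 = 0) := by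
  have hlead : 0 < a2 * c2 / c1 := by positivity
  have hmid : a3 + a5 - a2 * a4 * c2 / c1 < 0 := by
    rw [sub_neg, lt_div_iff₀ hc1]
    linarith
  refine ⟨card_filter_mul_neg_eq_one_of_neg_of_last_pos ?_ (by simpa using mul_pos ha4 ha5),
    existsUnique_pos_root_neg_quartic hlead.le ha1.le hmid.le (by positivity) (by positivity)⟩
  intro i hi
  fin_cases i <;> simp at hi ⊢
  all_goals first | positivity | linarith

/-- If `c1*(a3+a5) < a2*a4*c2` then the coefficient sequence of the quartic `P`
has exactly one sign change, and `P` has exactly one positive real root. -/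
theorem quartic_one_sign_change_unique_pos_root
    (a1 a2 a3 a4 a5 c1 c2 : ℝ)
    (ha1 : 0 < a1) (ha2 : 0 < a2) (ha3 : 0 < a3) (ha4 : 0 < a4) (ha5 : 0 < a5)
    (hc1 : 0 < c1) (hc2 : 0 < c2)
    (hcond : c1 * (a3 + a5) < a2 * a4 * c2) :
    -- coefficient sequence in descending degree
    (let coeffs : Fin 5 → ℝ :=
      ![-(a2 * c2 / c1), -a1, a3 + a5 - a2 * a4 * c2 / c1, -a1 * a4, a4 * a5]
     (Finset.univ.filter
        (fun i : Fin 4 => coeffs i.castSucc * coeffs i.succ < 0)).card = 1) ∧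
    (∃! u : ℝ, 0 < u ∧
        -(a2 * c2 / c1) * u ^ 4 - a1 * u ^ 3
          + (a3 + a5 - a2 * a4 * c2 / c1) * u ^ 2 - a1 * a4 * u + a4 * a5 = 0) :=
  quartic_one_sign_change_unique_pos_root_general a1 a2 a3 a4 a5 c1 c2 ha1 ha2 ha4 ha5 hc1 hc2 hcond
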